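/- arXiv:1409.4377 — 2 statements merged into one kernel-verified Lean document; each statement's English description precedes it below -/
import Mathlib

section
/- Price's theorem, first identity: if X is an ℝⁿ-valued Gaussian random vector with mean μ and positive definite covariance Σ, and f: ℝⁿ → ℝ is continuously differentiable with f and its gradient satisfying p_{μ,Σ}(x)·|∂_x f(x)| = o(e^{−ε|x|²}) as x → ∞ for some ε > 0 (so all integrals converge and differentiation under the integral is valid), then the gradient with respect to μ of g(μ,Σ) := E[f(X)] equals E[∂_x f(X)]. -/
open Matrix MeasureTheory Filter Asymptotics

noncomputable def gaussianDensity {n : ℕ} (μ : Fin n → ℝ) (S : Matrix (Fin n) (Fin n) ℝ)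
    (x : Fin n → ℝ) : ℝ :=
  (2 * Real.pi) ^ (-(n : ℝ) / 2) * S.det ^ (-(1 : ℝ) / 2) *
    Real.exp (-(1 / 2 : ℝ) * ((x - μ) ⬝ᵥ (S⁻¹ *ᵥ (x - μ))))

/-!
Since `p_m(x) = p_0(x - m)`, the substitution `x = y + m` moves the mean from the density onto
`f`: `g(m) = ∫ f(y + m) p_0(y) dy`, and differentiating under the integral sign gives
`∫ p_0(y) f'(y + μ) dy = E[f'(X)]`. For the dominating function, `p_0(y) ≤ e^{a(1+|y|)} p_μ(y + m)`
whenever `|m - μ| ≤ 1`, and the decay hypothesis bounds `p_μ |f'|` by a multiple of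
`e^{-ε|x|²}` everywhere (on compacts by continuity); the linear term `a|y|` is then absorbed
into half of the Gaussian exponent.
-/

open Real Metric

theorem exists_norm_le_mul_of_isBigO_cocompact {X E : Type*} [TopologicalSpace X]
    [SeminormedAddCommGroup E] {u : X → E} {v : X → ℝ} (hu : Continuous u) (hv : Continuous v)
    (hv_pos : ∀ x, 0 < v x) (huv : u =O[cocompact X] v) : ∃ C, ∀ x, ‖u x‖ ≤ C * v x := by
  have hw : Continuous fun x => (v x)⁻¹ * ‖u x‖ :=
    (hv.inv₀ fun x => (hv_pos x).ne').mul hu.norm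
  have hw_bigO : (fun x => (v x)⁻¹ * ‖u x‖) =O[cocompact X] (1 : X → ℝ) :=
    ((isBigO_refl (fun x => (v x)⁻¹) _).mul huv.norm_left).congr_right
      fun x => inv_mul_cancel₀ (hv_pos x).ne'
  obtain ⟨C, hC⟩ := isBounded_iff_forall_norm_le.1 (hw.isBounded_range_iff_isBigO.2 hw_bigO)
  refine ⟨C, fun x => ?_⟩
  have hx := (le_abs_self _).trans (hC _ ⟨x, rfl⟩)
  rwa [inv_mul_le_iff₀ (hv_pos x), mul_comm] at hx

theorem integrable_exp_neg_mul_sq_norm {E : Type*} [NormedAddCommGroup E] [NormedSpace ℝ E]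
    [FiniteDimensional ℝ E] [MeasurableSpace E] [BorelSpace E] (ν : Measure E)
    [ν.IsAddHaarMeasure] {b : ℝ} (hb : 0 < b) :
    Integrable (fun x : E => exp (-b * ‖x‖ ^ 2)) ν := by
  rcases subsingleton_or_nontrivial E with hE | hE
  · have h1 : (fun x : E => exp (-b * ‖x‖ ^ 2)) = fun _ => 1 :=
      funext fun x => by rw [Subsingleton.elim x 0, norm_zero]; simp
    exact h1 ▸ integrable_const _
  · refine (integrable_fun_norm_addHaar ν (f := fun y => exp (-b * y ^ 2))).2 ?_
    have h := integrableOn_rpow_mul_exp_neg_mul_sq hb (s := (Module.finrank ℝ E - 1 : ℕ))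
      (by linarith [Nat.cast_nonneg (α := ℝ) (Module.finrank ℝ E - 1)])
    simpa only [Real.rpow_natCast, smul_eq_mul] using h

theorem sq_norm_le_sq_norm_add_add {E : Type*} [SeminormedAddCommGroup E] (y m : E) :
    ‖y‖ ^ 2 ≤ ‖y + m‖ ^ 2 + 2 * ‖m‖ * ‖y‖ := by
  have h := norm_le_norm_add_norm_sub (y + m) y
  rw [add_sub_cancel_left] at h
  rcases le_total ‖y‖ ‖m‖ with hym | hmy
  · nlinarith [norm_nonneg y, sq_nonneg ‖y + m‖]
  · have h2 := mul_self_le_mul_self (sub_nonneg.2 hmy) (sub_le_iff_le_add.2 h)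
    nlinarith [sq_nonneg ‖m‖]

theorem exists_abs_dotProduct_mulVec_le {ι : Type*} [Fintype ι] [DecidableEq ι]
    (A : Matrix ι ι ℝ) : ∃ a ≥ 0, ∀ v w : ι → ℝ, |v ⬝ᵥ (A *ᵥ w)| ≤ a * ‖v‖ * ‖w‖ := by
  let B : (ι → ℝ) →L[ℝ] (ι → ℝ) →L[ℝ] ℝ := (Matrix.toLinearMap₂' ℝ A).toContinuousBilinearMap
  exact ⟨‖B‖, norm_nonneg B, fun v w => by
    simpa [B, Matrix.toLinearMap₂'_apply'] using B.le_opNorm₂ v w⟩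

section TranslateIntegral

variable {E : Type*} [NormedAddCommGroup E] [NormedSpace ℝ E] [MeasurableSpace E] [BorelSpace E]
  [SecondCountableTopology E] {ν : Measure E} [ν.IsAddRightInvariant]

theorem hasFDerivAt_integral_mul_comp_sub {f φ G : E → ℝ} {x₀ : E} {r : ℝ} (hr : 0 < r)
    (hf : ContDiff ℝ 1 f) (hφ : Continuous φ) (hint : Integrable (fun x => f x * φ (x - x₀)) ν)
    (hG : Integrable G ν) (hbound : ∀ y, ∀ m ∈ ball x₀ r, |φ y| * ‖fderiv ℝ f (y + m)‖ ≤ G y) :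
    HasFDerivAt (fun m => ∫ x, f x * φ (x - m) ∂ν) (∫ x, φ (x - x₀) • fderiv ℝ f x ∂ν) x₀ := by
  have hdiff (y m : E) : HasFDerivAt (fun m => f (y + m) * φ y) (φ y • fderiv ℝ f (y + m)) m := by
    have := (hf.differentiable one_ne_zero (y + m)).hasFDerivAt.comp m
      ((hasFDerivAt_id m).const_add y)
    simpa using this.mul_const (φ y)
  have hderiv : HasFDerivAt (fun m => ∫ y, f (y + m) * φ y ∂ν)
      (∫ y, φ y • fderiv ℝ f (y + x₀) ∂ν) x₀ :=
    hasFDerivAt_integral_of_dominated_of_fderiv_le (F := fun m y => f (y + m) * φ y)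
      (ball_mem_nhds x₀ hr)
      (.of_forall fun m =>
        ((hf.continuous.comp (continuous_add_const m)).mul hφ).aestronglyMeasurable)
      (by simpa only [add_sub_cancel_right] using hint.comp_add_right x₀)
      (hφ.smul ((hf.continuous_fderiv one_ne_zero).comp
        (continuous_add_const x₀))).aestronglyMeasurable
      (.of_forall fun y m hm => by rw [norm_smul, Real.norm_eq_abs]; exact hbound y m hm)
      hG (.of_forall fun y m _ => hdiff y m)
  convert hderiv using 1
  · funext m
    rw [← integral_add_right_eq_self _ m]
    simp only [add_sub_cancel_right]
  · rw [← integral_add_right_eq_self _ x₀]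
    simp only [add_sub_cancel_right]

end TranslateIntegral

section GaussianDensity

variable {n : ℕ}

theorem gaussianDensity_eq_zero_sub (m : Fin n → ℝ) (S : Matrix (Fin n) (Fin n) ℝ)
    (x : Fin n → ℝ) : gaussianDensity m S x = gaussianDensity 0 S (x - m) := by
  simp [gaussianDensity]

theorem continuous_gaussianDensity (m : Fin n → ℝ) (S : Matrix (Fin n) (Fin n) ℝ) :
    Continuous (gaussianDensity m S) := by
  unfold gaussianDensity
  fun_prop

theorem gaussianDensity_pos {S : Matrix (Fin n) (Fin n) ℝ} (hS : S.PosDef) (m x : Fin n → ℝ) :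
    0 < gaussianDensity m S x := by
  have := hS.det_pos
  unfold gaussianDensity
  positivity

theorem exists_gaussianDensity_le_exp_mul {S : Matrix (Fin n) (Fin n) ℝ} (hS : S.PosDef) :
    ∃ a, ∀ y d : Fin n → ℝ, ‖d‖ ≤ 1 →
      gaussianDensity 0 S y ≤ exp (a * (1 + ‖y‖)) * gaussianDensity 0 S (y + d) := by
  obtain ⟨a, ha₀, ha⟩ := exists_abs_dotProduct_mulVec_le S⁻¹
  refine ⟨a, fun y d hd => ?_⟩
  have hexpand : (y + d) ⬝ᵥ (S⁻¹ *ᵥ (y + d)) = y ⬝ᵥ (S⁻¹ *ᵥ y) + y ⬝ᵥ (S⁻¹ *ᵥ d)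
      + d ⬝ᵥ (S⁻¹ *ᵥ y) + d ⬝ᵥ (S⁻¹ *ᵥ d) := by
    simp only [add_dotProduct, mulVec_add, dotProduct_add]
    ring
  have h₁ := (abs_le.1 (ha y d)).2
  have h₂ := (abs_le.1 (ha d y)).2
  have h₃ := (abs_le.1 (ha d d)).2
  have := hS.det_pos
  simp only [gaussianDensity, sub_zero]
  rw [mul_left_comm, ← exp_add]
  gcongr
  nlinarith [norm_nonneg y, norm_nonneg d, mul_le_mul_of_nonneg_left hd ha₀]

variable {F : Type*} [NormedAddCommGroup F] {S : Matrix (Fin n) (Fin n) ℝ} {μ : Fin n → ℝ}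
  {g : (Fin n → ℝ) → F} {ε : ℝ}

theorem exists_gaussianDensity_mul_norm_le (hg : Continuous g)
    (hdecay : (fun x => gaussianDensity μ S x * ‖g x‖) =O[cocompact (Fin n → ℝ)]
      fun x => exp (-ε * ‖x‖ ^ 2)) :
    ∃ C, ∀ x, gaussianDensity μ S x * ‖g x‖ ≤ C * exp (-ε * ‖x‖ ^ 2) := by
  obtain ⟨C, hC⟩ := exists_norm_le_mul_of_isBigO_cocompact
    ((continuous_gaussianDensity μ S).mul hg.norm) (by fun_prop) (fun x => exp_pos _) hdecay
  exact ⟨C, fun x => (le_abs_self _).trans (hC x)⟩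

theorem integrable_gaussianDensity_smul [NormedSpace ℝ F] (hS : S.PosDef) (hg : Continuous g)
    (hε : 0 < ε) (hdecay : (fun x => gaussianDensity μ S x * ‖g x‖) =O[cocompact (Fin n → ℝ)]
      fun x => exp (-ε * ‖x‖ ^ 2)) :
    Integrable fun x => gaussianDensity μ S x • g x := by
  obtain ⟨C, hC⟩ := exists_gaussianDensity_mul_norm_le hg hdecay
  refine ((integrable_exp_neg_mul_sq_norm volume hε).const_mul C).mono'
    ((continuous_gaussianDensity μ S).smul hg).aestronglyMeasurable (.of_forall fun x => ?_)
  rw [norm_smul, Real.norm_of_nonneg (gaussianDensity_pos hS μ x).le]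
  exact hC x

theorem exists_integrable_bound_gaussianDensity_mul_comp_add (hS : S.PosDef) (hg : Continuous g)
    (hε : 0 < ε) (hdecay : (fun x => gaussianDensity μ S x * ‖g x‖) =O[cocompact (Fin n → ℝ)]
      fun x => exp (-ε * ‖x‖ ^ 2)) :
    ∃ G : (Fin n → ℝ) → ℝ, Integrable G ∧
      ∀ y, ∀ m ∈ ball μ 1, |gaussianDensity 0 S y| * ‖g (y + m)‖ ≤ G y := by
  obtain ⟨C, hC⟩ := exists_gaussianDensity_mul_norm_le hg hdecay
  have hC₀ : 0 ≤ C := nonneg_of_mul_nonneg_left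
    ((mul_nonneg (gaussianDensity_pos hS μ 0).le (norm_nonneg _)).trans (hC 0)) (exp_pos _)
  obtain ⟨a, ha⟩ := exists_gaussianDensity_le_exp_mul hS
  set b := a + 2 * ε * (‖μ‖ + 1)
  refine ⟨fun y => C * exp (a + b ^ 2 / (2 * ε)) * exp (-(ε / 2) * ‖y‖ ^ 2),
    (integrable_exp_neg_mul_sq_norm volume (half_pos hε)).const_mul _, fun y m hm => ?_⟩
  have hdist : ‖m - μ‖ ≤ 1 := (mem_ball_iff_norm.1 hm).le
  have hp : gaussianDensity 0 S y ≤ exp (a * (1 + ‖y‖)) * gaussianDensity μ S (y + m) := by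
    simpa [gaussianDensity_eq_zero_sub μ, add_sub_assoc] using ha y (m - μ) hdist
  have hexp : a * (1 + ‖y‖) + -ε * ‖y + m‖ ^ 2 ≤ a + b ^ 2 / (2 * ε) + -(ε / 2) * ‖y‖ ^ 2 := by
    have hm_le : ‖m‖ ≤ ‖μ‖ + 1 := by
      linarith [norm_le_norm_add_norm_sub μ m, norm_sub_rev μ m]
    have hsq := sq_norm_le_sq_norm_add_add y m
    have hamgm : b * ‖y‖ ≤ b ^ 2 / (2 * ε) + ε / 2 * ‖y‖ ^ 2 := by
      rw [div_add' _ _ _ (by positivity), le_div_iff₀ (by positivity)]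
      nlinarith [sq_nonneg (b - ε * ‖y‖)]
    nlinarith [norm_nonneg y, mul_le_mul_of_nonneg_left hm_le (norm_nonneg y)]
  calc |gaussianDensity 0 S y| * ‖g (y + m)‖
      ≤ exp (a * (1 + ‖y‖)) * (gaussianDensity μ S (y + m) * ‖g (y + m)‖) := by
        rw [abs_of_pos (gaussianDensity_pos hS 0 y), ← mul_assoc]
        gcongr
    _ ≤ exp (a * (1 + ‖y‖)) * (C * exp (-ε * ‖y + m‖ ^ 2)) :=
        mul_le_mul_of_nonneg_left (hC _) (exp_pos _).le
    _ = C * exp (a * (1 + ‖y‖) + -ε * ‖y + m‖ ^ 2) := by rw [exp_add]; ring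
    _ ≤ C * exp (a + b ^ 2 / (2 * ε) + -(ε / 2) * ‖y‖ ^ 2) := by gcongr
    _ = C * exp (a + b ^ 2 / (2 * ε)) * exp (-(ε / 2) * ‖y‖ ^ 2) := by rw [exp_add]; ring

end GaussianDensity

/-- Price's theorem, first identity: the gradient with respect to the mean `μ` of the
generalized moment `g(μ,S) = E[f(X)]` of a Gaussian vector equals `E[∂ₓ f(X)]`. -/
theorem price_first_identity {n : ℕ} (μ : Fin n → ℝ)
    (S : Matrix (Fin n) (Fin n) ℝ) (hS : S.PosDef)
    (f : (Fin n → ℝ) → ℝ) (hf : ContDiff ℝ 1 f)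
    (hdecay : ∃ ε > (0 : ℝ),
      (fun x => gaussianDensity μ S x * |f x|) =o[cocompact (Fin n → ℝ)]
          (fun x => Real.exp (-ε * ‖x‖ ^ 2)) ∧
      (fun x => gaussianDensity μ S x * ‖fderiv ℝ f x‖) =o[cocompact (Fin n → ℝ)]
          (fun x => Real.exp (-ε * ‖x‖ ^ 2))) :
    ∃ L : (Fin n → ℝ) →L[ℝ] ℝ,
      HasFDerivAt (fun m => ∫ x : Fin n → ℝ, f x * gaussianDensity m S x) L μ ∧
      ∀ h : Fin n → ℝ, L h = ∫ x : Fin n → ℝ, fderiv ℝ f x h * gaussianDensity μ S x := by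
  obtain ⟨ε, hε, hf_decay, hf'_decay⟩ := hdecay
  have hf' : Continuous (fderiv ℝ f) := hf.continuous_fderiv one_ne_zero
  obtain ⟨G, hG, hbound⟩ :=
    exists_integrable_bound_gaussianDensity_mul_comp_add hS hf' hε hf'_decay.isBigO
  have hint : Integrable fun x => f x * gaussianDensity 0 S (x - μ) := by
    simpa [← gaussianDensity_eq_zero_sub, mul_comm] using
      integrable_gaussianDensity_smul hS hf.continuous hε hf_decay.isBigO
  have hderiv := hasFDerivAt_integral_mul_comp_sub one_pos hf
    (continuous_gaussianDensity 0 S) hint hG hbound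
  simp only [← gaussianDensity_eq_zero_sub] at hderiv
  refine ⟨_, hderiv, fun h => ?_⟩
  rw [ContinuousLinearMap.integral_apply
    (integrable_gaussianDensity_smul hS hf' hε hf'_decay.isBigO)]
  simp [mul_comm]
end

section
/- Lower bound for the quadratic-exponential moment: for Π, Σ positive definite symmetric and μ ∈ ℝⁿ, exp(−(1/2)μᵀΨμ)/√(det(Iₙ + ΣΠ)) ≥ 1 − (1/2)(μᵀΠμ + trace(ΣΠ)), where Ψ = (Π⁻¹ + Σ)⁻¹. -/
/-!
Write `Ψ = (Π⁻¹ + Σ)⁻¹`. Then `Π - Ψ = Ψ (Σ + ΣΠΣ) Ψ`, so `Ψ ≤ Π` in the Loewner order and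
`μᵀΨμ ≤ μᵀΠμ`. Factoring `Σ = BᵀB`, `det (1 + ΣΠ) = det (1 + BΠBᵀ) = ∏ (1 + λᵢ)` over the
eigenvalues `λᵢ ≥ 0` of `BΠBᵀ`, which lies between `1` and `∏ exp λᵢ = exp (trace ΣΠ)`. Hence the
left-hand side is at least `exp (-(μᵀΠμ + trace ΣΠ) / 2)`, and `exp ξ ≥ 1 + ξ` finishes.
-/

open Matrix

namespace Matrix

variable {n : Type*} [Fintype n] [DecidableEq n]

theorem IsHermitian.det_one_add {𝕜 : Type*} [RCLike 𝕜] {A : Matrix n n 𝕜} (hA : A.IsHermitian) :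
    (1 + A).det = ∏ i, (1 + (hA.eigenvalues i : 𝕜)) := by
  conv_lhs =>
    rw [hA.spectral_theorem, ← map_one (Unitary.conjStarAlgAut 𝕜 _ hA.eigenvectorUnitary),
      ← map_add, Unitary.conjStarAlgAut_apply, det_mul_right_comm,
      Unitary.mul_star_self_of_mem hA.eigenvectorUnitary.2, one_mul, ← diagonal_one,
      diagonal_add, det_diagonal]
  simp

namespace PosSemidef

variable {A : Matrix n n ℝ}

theorem one_le_det_one_add (hA : A.PosSemidef) : 1 ≤ (1 + A).det := by
  rw [hA.isHermitian.det_one_add]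
  exact Finset.one_le_prod fun i _ ↦ by simpa using hA.eigenvalues_nonneg i

theorem det_one_add_le_exp_trace (hA : A.PosSemidef) : (1 + A).det ≤ Real.exp A.trace := by
  rw [hA.isHermitian.det_one_add, hA.isHermitian.trace_eq_sum_eigenvalues, Real.exp_sum]
  refine Finset.prod_le_prod (fun i _ ↦ ?_) fun i _ ↦ ?_
  · simpa using add_nonneg zero_le_one (hA.eigenvalues_nonneg i)
  · simpa [add_comm] using Real.add_one_le_exp (hA.isHermitian.eigenvalues i)

variable {S P : Matrix n n ℝ}

theorem exists_posSemidef_det_one_add_mul_eq (hS : S.PosSemidef) (hP : P.PosSemidef) :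
    ∃ A : Matrix n n ℝ, A.PosSemidef ∧ (1 + S * P).det = (1 + A).det ∧
      (S * P).trace = A.trace := by
  open MatrixOrder in
  obtain ⟨B, rfl⟩ := CStarAlgebra.nonneg_iff_eq_star_mul_self.mp hS.nonneg
  refine ⟨B * P * star B, hP.mul_mul_conjTranspose_same B, ?_, ?_⟩
  · rw [mul_assoc, det_one_add_mul_comm, mul_assoc]
  · rw [mul_assoc, trace_mul_comm, mul_assoc]

theorem one_le_det_one_add_mul (hS : S.PosSemidef) (hP : P.PosSemidef) :
    1 ≤ (1 + S * P).det := by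
  obtain ⟨A, hA, hdet, -⟩ := hS.exists_posSemidef_det_one_add_mul_eq hP
  exact hdet ▸ hA.one_le_det_one_add

theorem det_one_add_mul_le_exp_trace (hS : S.PosSemidef) (hP : P.PosSemidef) :
    (1 + S * P).det ≤ Real.exp (S * P).trace := by
  obtain ⟨A, hA, hdet, htr⟩ := hS.exists_posSemidef_det_one_add_mul_eq hP
  exact hdet ▸ htr ▸ hA.det_one_add_le_exp_trace

end PosSemidef

theorem PosDef.inv_inv_add_le {P S : Matrix n n ℝ} (hP : P.PosDef) (hS : S.PosSemidef) :
    open MatrixOrder in (P⁻¹ + S)⁻¹ ≤ P := by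
  have hM : (P⁻¹ + S).PosDef := hP.inv.add_posSemidef hS
  set M := P⁻¹ + S
  set Ψ := M⁻¹
  have hP_unit : IsUnit P.det := hP.det_pos.ne'.isUnit
  have hM_unit : IsUnit M.det := hM.det_pos.ne'.isUnit
  have h_middle : S + S * P * S = M * P * M - M := by
    rw [show S = M - P⁻¹ by simp [M]]
    simp only [sub_mul, mul_sub, mul_assoc, mul_nonsing_inv _ hP_unit,
      nonsing_inv_mul_cancel_left _ _ hP_unit, mul_one]
    abel
  have h_eq : P - Ψ = Ψ * (S + S * P * S) * Ψᴴ := by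
    rw [hM.isHermitian.inv.eq, h_middle]
    simp only [sub_mul, mul_sub, mul_assoc, mul_nonsing_inv _ hM_unit, mul_one]
    rw [← mul_assoc, nonsing_inv_mul _ hM_unit, one_mul]
  rw [Matrix.le_iff, h_eq]
  refine (hS.add ?_).mul_mul_conjTranspose_same Ψ
  have hSPS := hP.posSemidef.mul_mul_conjTranspose_same S
  rwa [hS.isHermitian.eq] at hSPS

end Matrix

/-- Lower bound for the quadratic-exponential Gaussian moment:
`exp(-(1/2)μᵀΨμ)/sqrt(det(I + ΣΠ)) ≥ 1 - (1/2)(μᵀΠμ + trace(ΣΠ))`, `Ψ = (Π⁻¹+Σ)⁻¹`. -/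
theorem quadratic_exponential_lower_bound {n : ℕ} (μ : Fin n → ℝ)
    (S P : Matrix (Fin n) (Fin n) ℝ) (hS : S.PosDef) (hP : P.PosDef) :
    Real.exp (-(1 / 2 : ℝ) * (μ ⬝ᵥ ((P⁻¹ + S)⁻¹ *ᵥ μ))) / Real.sqrt ((1 + S * P).det) ≥
      1 - (1 / 2 : ℝ) * (μ ⬝ᵥ (P *ᵥ μ) + Matrix.trace (S * P)) := by
  have hq : μ ⬝ᵥ ((P⁻¹ + S)⁻¹ *ᵥ μ) ≤ μ ⬝ᵥ (P *ᵥ μ) := by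
    have h := (hP.inv_inv_add_le hS.posSemidef).dotProduct_mulVec_nonneg μ
    simpa [sub_mulVec, dotProduct_sub] using h
  have hdet_pos : 0 < (1 + S * P).det :=
    zero_lt_one.trans_le (hS.posSemidef.one_le_det_one_add_mul hP.posSemidef)
  have hsqrt : Real.sqrt (1 + S * P).det ≤ Real.exp ((S * P).trace / 2) := by
    rw [Real.exp_half]
    exact Real.sqrt_le_sqrt (hS.posSemidef.det_one_add_mul_le_exp_trace hP.posSemidef)
  set q := μ ⬝ᵥ ((P⁻¹ + S)⁻¹ *ᵥ μ)
  set p := μ ⬝ᵥ (P *ᵥ μ)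
  set t := (S * P).trace
  calc 1 - 1 / 2 * (p + t)
      ≤ Real.exp (-(1 / 2) * (p + t)) := by linarith [Real.add_one_le_exp (-(1 / 2) * (p + t))]
    _ = Real.exp (-(1 / 2) * p) / Real.exp (t / 2) := by rw [← Real.exp_sub]; ring_nf
    _ ≤ Real.exp (-(1 / 2) * q) / Real.sqrt (1 + S * P).det :=
      div_le_div₀ (Real.exp_pos _).le (Real.exp_le_exp.2 (by linarith))
        (Real.sqrt_pos.2 hdet_pos) hsqrt
end
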